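/- In the inclusion game, prover has a winning strategy for the emptiness game from a sentential form α (i.e., a strategy ensuring every maximal conforming play from α is infinite) if and only if the least fixed-point solution satisfies σ(α) ≡ false. -/

import Mathlib

/-!
Formulas are negation-free, so `σ(α) ≡ false` fails exactly when `σ(α)` holds under the all-true
assignment, i.e. when `σ(X)` does for every non-terminal `X` of `α`; at that assignment the equations
become the attractor equations of the game for refuter.

If `σ(α)` holds at some approximation level, refuter can force a terminal word by induction on the
level, so no prover strategy wins. If it fails at the stable level `i₀`, that level is a fixed point
and prover wins by always moving to a position whose interpretation is still false: she can always
find one, refuter cannot leave such positions, and terminal words are interpreted as true.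
-/

/-- Negation-free Boolean formulas over atomic propositions (boxes) `B`,
with a distinguished formula `fls` (false). -/
inductive Formula (B : Type) : Type where
  | fls : Formula B
  | box : B → Formula B
  | and : Formula B → Formula B → Formula B
  | or : Formula B → Formula B → Formula B

namespace Formula

variable {B : Type}

/-- Satisfaction under a truth assignment to the boxes. -/
def sat (ν : B → Prop) : Formula B → Prop
  | fls => False
  | box b => ν b
  | and F G => F.sat ν ∧ G.sat ν
  | or F G => F.sat ν ∨ G.sat ν

/-- Logical equivalence of formulas. -/
def Equiv (F G : Formula B) : Prop := ∀ ν : B → Prop, F.sat ν ↔ G.sat ν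

/-- Composition of a box with a formula. -/
def boxSeq [Mul B] (r : B) : Formula B → Formula B
  | fls => fls
  | box t => box (r * t)
  | and G1 G2 => and (boxSeq r G1) (boxSeq r G2)
  | or G1 G2 => or (boxSeq r G1) (boxSeq r G2)

/-- Relational composition of formulas: `false;G = F;false = false`, it
distributes over `∧`/`∨` on the left, and boxes distribute over `∧`/`∨`. -/
def seq [Mul B] : Formula B → Formula B → Formula B
  | fls, _ => fls
  | box r, G => boxSeq r G
  | and F1 F2, G => and (F1.seq G) (F2.seq G)
  | or F1 F2, G => or (F1.seq G) (F2.seq G)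

end Formula

/-- A context-free grammar with an ownership partitioning of the
non-terminals (`prover X = true` iff `X` is owned by prover); every
non-terminal has at least one rule. -/
structure GameGrammar (N T : Type) where
  prover : N → Bool
  rules : N → List (List (N ⊕ T))
  rules_nonempty : ∀ X, rules X ≠ []

/-- Sentential forms: words over non-terminals and terminals. -/
abbrev SF (N T : Type) := List (N ⊕ T)

variable {N T B : Type}

/-- Interpretation of a sentential form under an assignment `σ` of formulas
to non-terminals: `ε ↦ id`, terminals `a ↦ ⟦a⟧`, concatenation ↦ relational
composition. -/
def interpSF [Mul B] [One B] (boxT : T → B) (σ : N → Formula B) : SF N T → Formula B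
  | [] => Formula.box 1
  | (Sum.inl X) :: rest => (σ X).seq (interpSF boxT σ rest)
  | (Sum.inr a) :: rest => (Formula.box (boxT a)).seq (interpSF boxT σ rest)

/-- Combine a (nonempty) list of formulas by conjunction (`isAnd = true`) or
disjunction. -/
def combineList (isAnd : Bool) : List (Formula B) → Formula B
  | [] => Formula.fls
  | F :: rest =>
      rest.foldl (fun acc G => if isAnd then Formula.and acc G else Formula.or acc G) F

/-- One application of the system of equations: the right-hand side for `X` is
the conjunction (if prover owns `X`) or disjunction (if refuter owns `X`) of
the interpretations of the right-hand sides of `X`'s rules. -/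
def eqStep [Mul B] [One B] (G : GameGrammar N T) (boxT : T → B)
    (σ : N → Formula B) : N → Formula B :=
  fun X => combineList (G.prover X) ((G.rules X).map (interpSF boxT σ))

/-- The `i`-th Kleene approximant, starting from `false` everywhere. -/
def approx [Mul B] [One B] (G : GameGrammar N T) (boxT : T → B) : ℕ → N → Formula B
  | 0 => fun _ => Formula.fls
  | i + 1 => eqStep G boxT (approx G boxT i)

/-- A sentential form is a terminal word. -/
def IsTerminalSF (α : SF N T) : Prop := ∀ s ∈ α, ∃ a : T, s = Sum.inr a

/-- The left-derivation relation: replace the leftmost non-terminal using a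
rule of the grammar. -/
def Derives (G : GameGrammar N T) (α β : SF N T) : Prop :=
  ∃ (w : List T) (X : N) (η : List (N ⊕ T)) (γ : SF N T),
    α = w.map Sum.inr ++ Sum.inl X :: γ ∧ η ∈ G.rules X ∧
    β = w.map Sum.inr ++ (η ++ γ)

/-- It is prover's turn: the leftmost non-terminal is owned by prover. -/
def ProverTurn (G : GameGrammar N T) (α : SF N T) : Prop :=
  ∃ (w : List T) (X : N) (γ : SF N T),
    α = w.map Sum.inr ++ Sum.inl X :: γ ∧ G.prover X = true

/-- A finite play from `α`: a nonempty sequence of positions starting in `α`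
and linked by left-derivation steps. -/
def IsPlay (G : GameGrammar N T) (α : SF N T) (p : List (SF N T)) : Prop :=
  p.head? = some α ∧ p.Chain' (Derives G)

/-- A finite play conforms to the strategy `s` of the player whose turns are
described by `turn`: whenever it is that player's turn, the next position is
the one returned by the strategy. -/
def Conforms (turn : SF N T → Prop) (s : List (SF N T) → SF N T)
    (p : List (SF N T)) : Prop :=
  ∀ (i : ℕ) (h : i + 1 < p.length),
    turn (p.get ⟨i, Nat.lt_of_succ_lt h⟩) →
    p.get ⟨i + 1, h⟩ = s (p.take (i + 1))

/-- Prover has a winning strategy for the emptiness game from `α`: a strategy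
returning legal moves at her turns such that no conforming finite play ends in
a terminal word, i.e. every maximal conforming play is infinite. -/
def ProverWinsEmptiness (G : GameGrammar N T) (α : SF N T) : Prop :=
  ∃ s : List (SF N T) → SF N T,
    (∀ p : List (SF N T), IsPlay G α p → Conforms (ProverTurn G) s p →
      ProverTurn G p.getLast! → Derives G p.getLast! (s p)) ∧
    (∀ p : List (SF N T), IsPlay G α p → Conforms (ProverTurn G) s p →
      ¬ IsTerminalSF p.getLast!)

namespace Formula

theorem sat_mono {ν ν' : B → Prop} (h : ∀ b, ν b → ν' b) :
    ∀ {F : Formula B}, F.sat ν → F.sat ν'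
  | .fls, hF => hF
  | .box _, hF => h _ hF
  | .and _ _, hF => ⟨sat_mono h hF.1, sat_mono h hF.2⟩
  | .or _ _, hF => hF.imp (sat_mono h) (sat_mono h)

theorem equiv_fls_iff {F : Formula B} : F.Equiv fls ↔ ¬ F.sat ⊤ :=
  ⟨fun h hF => (h ⊤).mp hF,
    fun h _ => ⟨fun hF => h (sat_mono (fun _ _ => trivial) hF), False.elim⟩⟩

theorem sat_top_boxSeq [Mul B] (r : B) : ∀ F : Formula B, (boxSeq r F).sat ⊤ ↔ F.sat ⊤
  | .fls => Iff.rfl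
  | .box _ => Iff.rfl
  | .and F G => and_congr (sat_top_boxSeq r F) (sat_top_boxSeq r G)
  | .or F G => or_congr (sat_top_boxSeq r F) (sat_top_boxSeq r G)

theorem sat_top_seq [Mul B] : ∀ F G : Formula B, (F.seq G).sat ⊤ ↔ F.sat ⊤ ∧ G.sat ⊤
  | .fls, _ => ⟨False.elim, And.left⟩
  | .box r, G => (sat_top_boxSeq r G).trans ⟨fun h => ⟨trivial, h⟩, And.right⟩
  | .and F₁ F₂, G => (and_congr (sat_top_seq F₁ G) (sat_top_seq F₂ G)).trans and_and_right.symm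
  | .or F₁ F₂, G => (or_congr (sat_top_seq F₁ G) (sat_top_seq F₂ G)).trans or_and_right.symm

theorem sat_foldl_and (ν : B → Prop) :
    ∀ (l : List (Formula B)) (F : Formula B), (l.foldl and F).sat ν ↔ F.sat ν ∧ ∀ G ∈ l, G.sat ν
  | [], _ => by simp
  | G :: l, F => by simp [sat_foldl_and ν l (F.and G), sat, and_assoc]

theorem sat_foldl_or (ν : B → Prop) :
    ∀ (l : List (Formula B)) (F : Formula B), (l.foldl or F).sat ν ↔ F.sat ν ∨ ∃ G ∈ l, G.sat ν
  | [], _ => by simp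
  | G :: l, F => by simp [sat_foldl_or ν l (F.or G), sat, or_assoc]

theorem sat_combineList_true (ν : B → Prop) (l : List (Formula B)) :
    (combineList true l).sat ν ↔ l ≠ [] ∧ ∀ F ∈ l, F.sat ν := by
  cases l <;> simp [combineList, sat, sat_foldl_and]

theorem sat_combineList_false (ν : B → Prop) (l : List (Formula B)) :
    (combineList false l).sat ν ↔ ∃ F ∈ l, F.sat ν := by
  cases l <;> simp [combineList, sat, sat_foldl_or]

end Formula

def NontermsHold (σ : N → Formula B) (β : SF N T) : Prop :=
  ∀ X, Sum.inl X ∈ β → (σ X).sat ⊤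

section NontermsHold

variable {σ : N → Formula B} {β γ : SF N T}

@[simp] theorem nontermsHold_append :
    NontermsHold σ (β ++ γ) ↔ NontermsHold σ β ∧ NontermsHold σ γ := by
  simp only [NontermsHold, List.mem_append, or_imp, forall_and]

@[simp] theorem nontermsHold_cons_inl {X : N} :
    NontermsHold σ (Sum.inl X :: γ) ↔ (σ X).sat ⊤ ∧ NontermsHold σ γ := by
  simp [NontermsHold, or_imp, forall_and]

@[simp] theorem nontermsHold_cons_inr {a : T} :
    NontermsHold σ (Sum.inr a :: γ) ↔ NontermsHold σ γ := by
  simp [NontermsHold]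

@[simp] theorem nontermsHold_map_inr (w : List T) : NontermsHold σ (w.map Sum.inr) := by
  simp [NontermsHold]

theorem IsTerminalSF.nontermsHold (h : IsTerminalSF β) : NontermsHold σ β := by
  intro X hX
  obtain ⟨a, ha⟩ := h _ hX
  cases ha

theorem sat_top_interpSF [Mul B] [One B] (boxT : T → B) :
    ∀ β : SF N T, (interpSF boxT σ β).sat ⊤ ↔ NontermsHold σ β
  | [] => iff_of_true trivial fun _ h => absurd h List.not_mem_nil
  | Sum.inl X :: β => by
    simp [interpSF, Formula.sat_top_seq, sat_top_interpSF boxT β]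
  | Sum.inr a :: β => by
    simp [interpSF, Formula.sat_top_seq, Formula.sat, sat_top_interpSF boxT β]

theorem sat_top_eqStep [Mul B] [One B] (G : GameGrammar N T) (boxT : T → B) (X : N) :
    (eqStep G boxT σ X).sat ⊤ ↔
      if G.prover X then ∀ η ∈ G.rules X, NontermsHold σ η
      else ∃ η ∈ G.rules X, NontermsHold σ η := by
  unfold eqStep
  cases G.prover X
  · simp [Formula.sat_combineList_false, sat_top_interpSF]
  · simp [Formula.sat_combineList_true, sat_top_interpSF, G.rules_nonempty X]

end NontermsHold

section Derivations

variable {G : GameGrammar N T} {β γ δ : SF N T}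

theorem cons_inr_eq_leftmost_iff {a : T} {w : List T} {X : N} :
    Sum.inr a :: β = w.map Sum.inr ++ Sum.inl X :: γ ↔
      ∃ w', w = a :: w' ∧ β = w'.map Sum.inr ++ Sum.inl X :: γ := by
  cases w <;> simp [eq_comm]

theorem proverTurn_cons_inr {a : T} : ProverTurn G (Sum.inr a :: β) ↔ ProverTurn G β := by
  simp only [ProverTurn, cons_inr_eq_leftmost_iff]
  constructor
  · rintro ⟨_, X, γ, ⟨w, -, rfl⟩, hX⟩
    exact ⟨w, X, γ, rfl, hX⟩
  · rintro ⟨w, X, γ, rfl, hX⟩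
    exact ⟨a :: w, X, γ, ⟨w, rfl, rfl⟩, hX⟩

theorem derives_cons_inr {a : T} :
    Derives G (Sum.inr a :: β) δ ↔ ∃ δ', Derives G β δ' ∧ δ = Sum.inr a :: δ' := by
  simp only [Derives, cons_inr_eq_leftmost_iff]
  constructor
  · rintro ⟨_, X, η, γ, ⟨w, rfl, rfl⟩, hη, rfl⟩
    exact ⟨_, ⟨w, X, η, γ, rfl, hη, rfl⟩, rfl⟩
  · rintro ⟨_, ⟨w, X, η, γ, rfl, hη, rfl⟩, rfl⟩
    exact ⟨a :: w, X, η, γ, ⟨w, rfl, rfl⟩, hη, rfl⟩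

theorem proverTurn_cons_inl {X : N} : ProverTurn G (Sum.inl X :: γ) ↔ G.prover X = true := by
  constructor
  · rintro ⟨_ | _, Y, γ', h, hY⟩ <;> simp_all
  · exact fun hX => ⟨[], X, γ, rfl, hX⟩

theorem derives_cons_inl {X : N} :
    Derives G (Sum.inl X :: γ) δ ↔ ∃ η ∈ G.rules X, δ = η ++ γ := by
  constructor
  · rintro ⟨_ | _, Y, η, γ', h, hη, rfl⟩ <;> simp_all
  · rintro ⟨η, hη, rfl⟩
    exact ⟨[], X, η, γ, rfl, hη, rfl⟩

theorem IsTerminalSF.cons_inr {a : T} (h : IsTerminalSF β) : IsTerminalSF (Sum.inr a :: β) := by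
  rintro s (_ | ⟨_, hs⟩)
  exacts [⟨a, rfl⟩, h s hs]

theorem exists_derives_of_proverTurn (h : ProverTurn G β) : ∃ δ, Derives G β δ := by
  obtain ⟨w, X, γ, rfl, -⟩ := h
  exact ⟨_, w, X, _, γ, rfl, List.head_mem (G.rules_nonempty X), rfl⟩

end Derivations

/-- Refuter's attractor: the positions from which he can force the play into a terminal word. -/
inductive RefuterForces (G : GameGrammar N T) : SF N T → Prop where
  | terminal {β : SF N T} : IsTerminalSF β → RefuterForces G β
  | refuter {β δ : SF N T} : ¬ ProverTurn G β → Derives G β δ → RefuterForces G δ →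
      RefuterForces G β
  | prover {β : SF N T} : ProverTurn G β → (∀ δ, Derives G β δ → RefuterForces G δ) →
      RefuterForces G β

namespace RefuterForces

variable {G : GameGrammar N T}

theorem cons_inr {β : SF N T} (a : T) (h : RefuterForces G β) :
    RefuterForces G (Sum.inr a :: β) := by
  induction h with
  | terminal hβ => exact terminal hβ.cons_inr
  | refuter hturn hd _ ih =>
    exact refuter (proverTurn_cons_inr.not.mpr hturn) (derives_cons_inr.mpr ⟨_, hd, rfl⟩) ih
  | prover hturn _ ih =>
    refine prover (proverTurn_cons_inr.mpr hturn) fun δ hd => ?_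
    obtain ⟨δ', hd', rfl⟩ := derives_cons_inr.mp hd
    exact ih δ' hd'

/-- Refuter rewrites the non-terminals of `η` from left to right; at his own he picks a rule whose
non-terminals hold at level `m - 1`, and at prover's every rule has this property. -/
theorem append_of_nontermsHold [Mul B] [One B] (boxT : T → B) :
    ∀ (m : ℕ) (η γ : SF N T), NontermsHold (approx G boxT m) η → RefuterForces G γ →
      RefuterForces G (η ++ γ)
  | _, [], _, _, hγ => hγ
  | m, Sum.inr a :: η, γ, hη, hγ =>
    (append_of_nontermsHold boxT m η γ (nontermsHold_cons_inr.mp hη) hγ).cons_inr a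
  | 0, Sum.inl _ :: _, _, hη, _ => (nontermsHold_cons_inl.mp hη).1.elim
  | m + 1, Sum.inl X :: η, γ, hη, hγ => by
    obtain ⟨hX, hη⟩ := nontermsHold_cons_inl.mp hη
    have hrest := append_of_nontermsHold boxT (m + 1) η γ hη hγ
    change (eqStep G boxT (approx G boxT m) X).sat ⊤ at hX
    rw [sat_top_eqStep] at hX
    cases hprover : G.prover X
    · obtain ⟨η', hη', hη'm⟩ := by simpa [hprover] using hX
      exact refuter (by simp [proverTurn_cons_inl, hprover]) (derives_cons_inl.mpr ⟨η', hη', rfl⟩)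
        (append_of_nontermsHold boxT m η' _ hη'm hrest)
    · refine prover (proverTurn_cons_inl.mpr hprover) fun δ hd => ?_
      obtain ⟨η', hη', rfl⟩ := derives_cons_inl.mp hd
      simp only [hprover, if_true] at hX
      exact append_of_nontermsHold boxT m η' _ (hX η' hη') hrest
  termination_by m η => (m, η.length)

end RefuterForces

theorem List.getLast!_mem {α : Type*} [Inhabited α] {l : List α} (h : l ≠ []) : l.getLast! ∈ l :=
  List.getLast!_of_getLast? (List.getLast?_eq_some_getLast h) ▸ List.getLast_mem h

theorem List.getLast!_take_succ {α : Type*} [Inhabited α] {l : List α} {i : ℕ} (h : i < l.length) :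
    (l.take (i + 1)).getLast! = l[i] := by
  rw [List.getLast!_eq_getElem!, getElem!_pos _ _ (by simp; omega)]
  simp only [List.length_take, List.getElem_take]
  congr
  omega

section Plays

variable {G : GameGrammar N T} {α δ : SF N T} {p : List (SF N T)}

theorem IsPlay.singleton (G : GameGrammar N T) (α : SF N T) : IsPlay G α [α] :=
  ⟨rfl, List.isChain_singleton α⟩

theorem IsPlay.ne_nil (hp : IsPlay G α p) : p ≠ [] := by
  rintro rfl
  cases hp.1

theorem IsPlay.concat (hp : IsPlay G α p) (hd : Derives G p.getLast! δ) :
    IsPlay G α (p ++ [δ]) := by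
  have hne := hp.ne_nil
  refine ⟨by rw [List.head?_append_of_ne_nil _ hne]; exact hp.1, ?_⟩
  refine List.isChain_append.mpr ⟨hp.2, List.isChain_singleton δ, ?_⟩
  intro x hx y hy
  rw [List.getLast?_eq_some_getLast hne, Option.mem_def, Option.some.injEq] at hx
  cases hy
  rwa [← hx, ← List.getLast!_of_getLast? (List.getLast?_eq_some_getLast hne)]

theorem Conforms.singleton (turn : SF N T → Prop) (s : List (SF N T) → SF N T) (α : SF N T) :
    Conforms turn s [α] :=
  fun _ h => absurd h (by simp)

theorem Conforms.concat {turn : SF N T → Prop} {s : List (SF N T) → SF N T}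
    (hc : Conforms turn s p) (hδ : turn p.getLast! → δ = s p) :
    Conforms turn s (p ++ [δ]) := by
  intro i h hturn
  simp only [List.get_eq_getElem, List.length_append, List.length_singleton] at h hturn ⊢
  rcases Nat.lt_or_ge (i + 1) p.length with hi | hi
  · rw [List.getElem_append_left (by omega)] at hturn
    rw [List.getElem_append_left hi, List.take_append_of_le_length (by omega)]
    exact hc i hi hturn
  · have hip : p.length = i + 1 := by omega
    rw [List.getElem_append_left (by omega)] at hturn
    have hlast : p[i] = p.getLast! := by
      rw [← List.getLast!_take_succ, List.take_of_length_le (by omega)]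
    rw [List.take_left' hip, ← hδ (hlast ▸ hturn)]
    simp [hip]

theorem RefuterForces.exists_terminal_play {s : List (SF N T) → SF N T}
    (hlegal : ∀ p, IsPlay G α p → Conforms (ProverTurn G) s p →
      ProverTurn G p.getLast! → Derives G p.getLast! (s p))
    {β : SF N T} (hβ : RefuterForces G β) (hp : IsPlay G α p)
    (hc : Conforms (ProverTurn G) s p) (hlast : p.getLast! = β) :
    ∃ p', IsPlay G α p' ∧ Conforms (ProverTurn G) s p' ∧ IsTerminalSF p'.getLast! := by
  induction hβ generalizing p with
  | terminal hterm => exact ⟨p, hp, hc, hlast ▸ hterm⟩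
  | refuter hturn hd _ ih =>
    subst hlast
    exact ih (hp.concat hd) (hc.concat fun h => absurd h hturn) (by simp)
  | prover hturn _ ih =>
    subst hlast
    have hd := hlegal p hp hc hturn
    exact ih _ hd (hp.concat hd) (hc.concat fun _ => rfl) (by simp)

theorem IsPlay.forall_mem_of_positional {move : SF N T → SF N T} (P : SF N T → Prop)
    (hα : P α)
    (hstep : ∀ β δ, P β → Derives G β δ → (ProverTurn G β → δ = move β) → P δ)
    (hp : IsPlay G α p) (hc : Conforms (ProverTurn G) (fun q => move q.getLast!) p) :
    ∀ β ∈ p, P β := by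
  suffices ∀ i (h : i < p.length), P p[i] by
    intro β hβ
    obtain ⟨i, h, rfl⟩ := List.getElem_of_mem hβ
    exact this i h
  intro i
  induction i with
  | zero =>
    intro h
    obtain ⟨β, q, rfl⟩ := List.exists_cons_of_ne_nil hp.ne_nil
    cases hp.1
    exact hα
  | succ i ih =>
    intro h
    refine hstep _ _ (ih (by omega)) (List.isChain_iff_getElem.mp hp.2 i h) fun hturn => ?_
    simpa only [List.get_eq_getElem, List.getLast!_take_succ (Nat.lt_of_succ_lt h)]
      using hc i h hturn

end Plays

section ProverStrategy

variable {G : GameGrammar N T} {β δ : SF N T}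

open Classical in
noncomputable def greedyMove (G : GameGrammar N T) (good : SF N T → Prop) (β : SF N T) :
    SF N T :=
  if h : ∃ δ, Derives G β δ ∧ good δ then h.choose
  else if h' : ∃ δ, Derives G β δ then h'.choose else β

theorem derives_greedyMove {good : SF N T → Prop} (h : ∃ δ, Derives G β δ) :
    Derives G β (greedyMove G good β) := by
  unfold greedyMove
  split_ifs with hgood
  exacts [hgood.choose_spec.1, h.choose_spec]

theorem greedyMove_spec {good : SF N T → Prop} (h : ∃ δ, Derives G β δ ∧ good δ) :
    good (greedyMove G good β) := by
  rw [greedyMove, dif_pos h]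
  exact h.choose_spec.2

variable [Mul B] [One B] {boxT : T → B} {σ : N → Formula B}

theorem not_nontermsHold_of_derives_greedyMove
    (hpre : ∀ X, (eqStep G boxT σ X).sat ⊤ → (σ X).sat ⊤) (hβ : ¬ NontermsHold σ β)
    (hd : Derives G β δ) (hmove : ProverTurn G β → δ = greedyMove G (¬ NontermsHold σ ·) β) :
    ¬ NontermsHold σ δ := by
  obtain ⟨w, X, η, γ, rfl, hη, rfl⟩ := hd
  have hβ' : ¬ ((σ X).sat ⊤ ∧ NontermsHold σ γ) := by simpa using hβ
  cases hprover : G.prover X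
  · simp only [nontermsHold_append, nontermsHold_map_inr, true_and]
    rintro ⟨hησ, hγ⟩
    refine hβ' ⟨hpre X ?_, hγ⟩
    rw [sat_top_eqStep, hprover]
    exact ⟨η, hη, hησ⟩
  · rw [hmove ⟨w, X, γ, rfl, hprover⟩]
    refine greedyMove_spec (good := (¬ NontermsHold σ ·)) ?_
    by_cases hγ : NontermsHold σ γ
    · have hX : ¬ (eqStep G boxT σ X).sat ⊤ := fun hX => hβ' ⟨hpre X hX, hγ⟩
      simp only [sat_top_eqStep, hprover, if_true, not_forall] at hX
      obtain ⟨η', hη', hη'σ⟩ := hX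
      exact ⟨_, ⟨w, X, η', γ, rfl, hη', rfl⟩, by simp [hη'σ]⟩
    · exact ⟨_, ⟨w, X, _, γ, rfl, List.head_mem (G.rules_nonempty X), rfl⟩, by simp [hγ]⟩

end ProverStrategy

/-- Prover has a winning strategy for the emptiness game from `α` iff the
least fixed-point solution satisfies `σ(α) ≡ false`. -/
theorem emptiness_game_iff_false [Mul B] [One B] (G : GameGrammar N T)
    (boxT : T → B) (α : SF N T) (i₀ : ℕ)
    (hstab : ∀ k, i₀ ≤ k → ∀ X : N,
      Formula.Equiv (approx G boxT k X) (approx G boxT i₀ X)) :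
    ProverWinsEmptiness G α ↔
      Formula.Equiv (interpSF boxT (approx G boxT i₀) α) Formula.fls := by
  rw [Formula.equiv_fls_iff, sat_top_interpSF]
  constructor
  · rintro ⟨s, hlegal, hwin⟩ hα
    have hforce : RefuterForces G α := by
      simpa using RefuterForces.append_of_nontermsHold boxT i₀ α [] hα
        (.terminal fun _ h => absurd h List.not_mem_nil)
    obtain ⟨p, hp, hc, hterm⟩ := hforce.exists_terminal_play hlegal (IsPlay.singleton G α)
      (Conforms.singleton _ s α) rfl
    exact hwin p hp hc hterm
  · intro hα
    have hpre : ∀ X, (eqStep G boxT (approx G boxT i₀) X).sat ⊤ → (approx G boxT i₀ X).sat ⊤ :=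
      fun X => (hstab (i₀ + 1) i₀.le_succ X ⊤).mp
    refine ⟨fun q => greedyMove G (¬ NontermsHold (approx G boxT i₀) ·) q.getLast!,
      fun _ _ _ hturn => derives_greedyMove (exists_derives_of_proverTurn hturn),
      fun p hp hc hterm => ?_⟩
    have hinv := hp.forall_mem_of_positional _ hα
      (fun _ _ hβ hd hmove => not_nontermsHold_of_derives_greedyMove hpre hβ hd hmove) hc
    exact hinv _ (List.getLast!_mem hp.ne_nil) hterm.nontermsHold
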